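/- Let (I, μ) be a finite measure space and (Q_n) a sequence of measurable real-valued functions on I, all dominated pointwise in absolute value by an integrable function Q̂. If ∫_I limsup_n Q_n dμ ≤ liminf_n ∫_I Q_n dμ, then Q_n converges in measure to limsup_n Q_n as n → ∞. -/

import Mathlib

/-!
Write `L := limsup Qₙ`. Since `(Qₙ - L)⁺ → 0` pointwise and `(Qₙ - L)⁺ ≤ 2 Q̂`, dominated
convergence gives `∫ (Qₙ - L)⁺ → 0`. From `|t| = 2 t⁺ - t`,
`∫ |Qₙ - L| = 2 ∫ (Qₙ - L)⁺ + (∫ L - ∫ Qₙ)`, and the hypothesis `∫ L ≤ liminf ∫ Qₙ` makes the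
last term eventually smaller than any `ε > 0`. Hence `Qₙ → L` in `L¹`, so in measure.
-/

open MeasureTheory Filter Topology

section RealSequence

variable {ι : Type*} {l : Filter ι} {u : ι → ℝ}

lemma abs_limsup_le_of_forall_abs_le [l.NeBot] {C : ℝ} (h : ∀ i, |u i| ≤ C) :
    |limsup u l| ≤ C := by
  have hle (i : ι) : u i ≤ C := (abs_le.1 (h i)).2
  have hge (i : ι) : -C ≤ u i := (abs_le.1 (h i)).1
  have hbdd : IsBoundedUnder (· ≤ ·) l u := isBoundedUnder_of ⟨C, hle⟩
  have hbdd' : IsBoundedUnder (· ≥ ·) l u := isBoundedUnder_of ⟨-C, hge⟩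
  exact abs_le.2 ⟨le_limsup_of_frequently_le (.of_forall hge) hbdd,
    limsup_le_of_le hbdd'.isCoboundedUnder_le (.of_forall hle)⟩

lemma tendsto_posPart_sub_limsup (hu : IsBoundedUnder (· ≤ ·) l u) :
    Tendsto (fun i => (u i - limsup u l)⁺) l (𝓝 0) := by
  refine tendsto_order.2 ⟨fun a ha => .of_forall fun i => ha.trans_le (posPart_nonneg _),
    fun ε hε => ?_⟩
  filter_upwards [eventually_lt_of_limsup_lt (lt_add_of_pos_right (limsup u l) hε) hu] with i hi
  exact posPart_lt.2 ⟨by linarith, hε⟩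

end RealSequence

section Integral

variable {α : Type*} [MeasurableSpace α] {μ : Measure α}

lemma integral_abs_sub_eq_two_mul_integral_posPart {f g : α → ℝ} (hf : Integrable f μ)
    (hg : Integrable g μ) :
    ∫ x, |f x - g x| ∂μ = 2 * ∫ x, (f x - g x)⁺ ∂μ + (∫ x, g x ∂μ - ∫ x, f x ∂μ) := by
  have habs (t : ℝ) : |t| = 2 * t⁺ - t := by
    linarith [two_nsmul t⁺ ▸ abs_add_eq_two_nsmul_posPart t]
  have hpos : Integrable (fun x => (f x - g x)⁺) μ := (hf.sub hg).pos_part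
  simp_rw [habs]
  rw [integral_sub (g := fun x => f x - g x) (hpos.const_mul 2) (hf.sub hg), integral_const_mul,
    integral_sub hf hg]
  ring

lemma tendsto_integral_posPart_sub_limsup {f : ℕ → α → ℝ} {bound : α → ℝ}
    (hf : ∀ n, Measurable (f n)) (hbound : Integrable bound μ) (h : ∀ n x, |f n x| ≤ bound x) :
    Tendsto (fun n => ∫ x, (f n x - limsup (f · x) atTop)⁺ ∂μ) atTop (𝓝 0) := by
  have hlim : Measurable fun x => limsup (f · x) atTop := .limsup hf
  have hbdd (x : α) : IsBoundedUnder (· ≤ ·) atTop (f · x) :=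
    isBoundedUnder_of ⟨bound x, fun n => (abs_le.1 (h n x)).2⟩
  have hdom (n : ℕ) (x : α) : ‖(f n x - limsup (f · x) atTop)⁺‖ ≤ 2 * bound x := by
    have hfx := abs_le.1 (h n x)
    have hlimx := abs_le.1 (abs_limsup_le_of_forall_abs_le (l := atTop) (h · x))
    rw [Real.norm_of_nonneg (posPart_nonneg _)]
    exact sup_le (by linarith) (by linarith)
  simpa only [integral_zero] using tendsto_integral_of_dominated_convergence
    (F := fun n x => (f n x - limsup (f · x) atTop)⁺) (fun x => 2 * bound x)
    (fun n => (((hf n).sub hlim).max measurable_const).aestronglyMeasurable)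
    (hbound.const_mul 2) (fun n => ae_of_all _ (hdom n))
    (ae_of_all _ fun x => tendsto_posPart_sub_limsup (hbdd x))

lemma tendsto_integral_abs_sub_of_integral_le_liminf {ι : Type*} {l : Filter ι}
    {f : ι → α → ℝ} {g : α → ℝ} (hf : ∀ i, Integrable (f i) μ) (hg : Integrable g μ)
    (hpos : Tendsto (fun i => ∫ x, (f i x - g x)⁺ ∂μ) l (𝓝 0))
    (hbdd : IsBoundedUnder (· ≥ ·) l fun i => ∫ x, f i x ∂μ)
    (hle : ∫ x, g x ∂μ ≤ liminf (fun i => ∫ x, f i x ∂μ) l) :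
    Tendsto (fun i => ∫ x, |f i x - g x| ∂μ) l (𝓝 0) := by
  refine tendsto_order.2 ⟨fun a ha => .of_forall fun i =>
    ha.trans_le (integral_nonneg fun x => abs_nonneg _), fun ε hε => ?_⟩
  have hpos_small : ∀ᶠ i in l, ∫ x, (f i x - g x)⁺ ∂μ < ε / 4 :=
    hpos.eventually (gt_mem_nhds (by positivity))
  have hf_large : ∀ᶠ i in l, ∫ x, g x ∂μ - ε / 2 < ∫ x, f i x ∂μ :=
    eventually_lt_of_lt_liminf (by linarith) hbdd
  filter_upwards [hpos_small, hf_large] with i hi hi'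
  rw [integral_abs_sub_eq_two_mul_integral_posPart (hf i) hg]
  linarith

lemma tendstoInMeasure_of_tendsto_integral_norm_sub {ι E : Type*} [NormedAddCommGroup E]
    {l : Filter ι} {f : ι → α → E} {g : α → E} (hf : ∀ i, Integrable (f i) μ)
    (hg : Integrable g μ) (h : Tendsto (fun i => ∫ x, ‖f i x - g x‖ ∂μ) l (𝓝 0)) :
    TendstoInMeasure μ f l g := by
  refine tendstoInMeasure_of_tendsto_eLpNorm one_ne_zero (fun i => (hf i).aestronglyMeasurable)
    hg.aestronglyMeasurable ?_
  have heq (i : ι) : eLpNorm (f i - g) 1 μ = ENNReal.ofReal (∫ x, ‖f i x - g x‖ ∂μ) := by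
    rw [eLpNorm_one_eq_lintegral_enorm, ← ofReal_integral_norm_eq_lintegral_enorm ((hf i).sub hg)]
    rfl
  simpa only [heq, ENNReal.ofReal_zero, Function.comp_def] using
    (ENNReal.continuous_ofReal.tendsto 0).comp h

end Integral

theorem tendsto_in_measure_of_integral_limsup_le_liminf_general
    {I : Type*} [MeasurableSpace I] (μ : Measure I)
    (Q : ℕ → I → ℝ) (Qhat : I → ℝ)
    (hQmeas : ∀ n, Measurable (Q n))
    (hdom : ∀ n, ∀ x, |Q n x| ≤ Qhat x)
    (hQhat : Integrable Qhat μ)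
    (hineq : ∫ x, limsup (fun n => Q n x) atTop ∂μ ≤
      liminf (fun n => ∫ x, Q n x ∂μ) atTop) :
    ∀ ε > 0, Tendsto
      (fun N => μ {x | ε < |Q N x - limsup (fun n => Q n x) atTop|})
      atTop (nhds 0) := by
  have hQint (n : ℕ) : Integrable (Q n) μ :=
    hQhat.mono' (hQmeas n).aestronglyMeasurable (ae_of_all _ (hdom n))
  have hlim_int : Integrable (fun x => limsup (Q · x) atTop) μ :=
    hQhat.mono' (Measurable.limsup hQmeas).aestronglyMeasurable
      (ae_of_all _ fun x => abs_limsup_le_of_forall_abs_le (hdom · x))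
  have hbdd : IsBoundedUnder (· ≥ ·) atTop fun n => ∫ x, Q n x ∂μ :=
    isBoundedUnder_of ⟨-∫ x, Qhat x ∂μ, fun n =>
      neg_le_of_abs_le (norm_integral_le_of_norm_le (f := Q n) hQhat (ae_of_all _ (hdom n)))⟩
  have hL1 := tendsto_integral_abs_sub_of_integral_le_liminf hQint hlim_int
    (tendsto_integral_posPart_sub_limsup hQmeas hQhat hdom) hbdd hineq
  have hmeas := tendstoInMeasure_of_tendsto_integral_norm_sub hQint hlim_int hL1
  intro ε hε
  exact tendsto_of_tendsto_of_tendsto_of_le_of_le tendsto_const_nhds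
    (tendstoInMeasure_iff_norm.1 hmeas ε hε) (fun _ => zero_le)
    fun n => measure_mono fun x (hx : ε < _) => hx.le

/-- If the `Q n` are dominated by an integrable function and
`∫ limsup Qₙ ≤ liminf ∫ Qₙ`, then `Qₙ` converges in measure to `limsup Qₙ`. -/
theorem tendsto_in_measure_of_integral_limsup_le_liminf
    {I : Type*} [MeasurableSpace I] (μ : Measure I) [IsFiniteMeasure μ]
    (Q : ℕ → I → ℝ) (Qhat : I → ℝ)
    (hQmeas : ∀ n, Measurable (Q n))
    (hdom : ∀ n, ∀ x, |Q n x| ≤ Qhat x)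
    (hQhat : Integrable Qhat μ)
    (hineq : ∫ x, limsup (fun n => Q n x) atTop ∂μ ≤
      liminf (fun n => ∫ x, Q n x ∂μ) atTop) :
    ∀ ε > 0, Tendsto
      (fun N => μ {x | ε < |Q N x - limsup (fun n => Q n x) atTop|})
      atTop (nhds 0) :=
  tendsto_in_measure_of_integral_limsup_le_liminf_general μ Q Qhat hQmeas hdom hQhat hineq
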